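/- For every integer n ≥ 2, the equation ∑_{i=1}^{n} (−1)^{i−1} 2^{i−1} x_i = 0 has degree of regularity exactly n−1: it is (n−1)-regular but not n-regular. -/
import Mathlib

set_option maxHeartbeats 1000000

/-- A linear homogeneous equation `∑ aᵢ xᵢ = 0` (coefficients `a : Fin n → ℤ`) is
`r`-regular if every `r`-coloring of the positive integers (modeled as `C : ℕ → Fin r`)
admits a monochromatic solution in positive integers. -/
def IsRegularEq (n : ℕ) (a : Fin n → ℤ) (r : ℕ) : Prop :=
  ∀ C : ℕ → Fin r, ∃ x : Fin n → ℕ, (∀ i, 0 < x i) ∧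
    (∀ i j, C (x i) = C (x j)) ∧ (∑ i, a i * (x i : ℤ)) = 0

open Combinatorics Finset

theorem my_vdw (κ : Type) [Finite κ] (ℓ : ℕ) :
    ∃ N : ℕ, 0 < N ∧ ∀ C : ℕ → κ, ∃ b q : ℕ, 0 < b ∧ 0 < q ∧ b + ℓ * q ≤ N ∧
      ∀ i ≤ ℓ, C (b + i * q) = C b := by
  obtain ⟨ι, ιfin, hι⟩ := Line.exists_mono_in_high_dimension (Fin (ℓ + 1)) κ
  refine ⟨1 + 2 * ℓ * Fintype.card ι, by omega, fun C => ?_⟩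
  classical
  obtain ⟨l, c, hl⟩ := hι (fun w => C (1 + ∑ i, (w i : ℕ)))
  set T : Finset ι := Finset.univ.filter (fun i => l.idxFun i = none) with hT
  set W : ℕ := T.card with hW
  set s : ℕ := ∑ i ∈ Finset.univ \ T, ((l.idxFun i).getD 0 : ℕ) with hs
  have hWpos : 0 < W := by
    obtain ⟨i, hi⟩ := l.proper
    exact Finset.card_pos.mpr ⟨i, by simp [hT, hi]⟩
  have happly : ∀ (x : Fin (ℓ+1)) (i : ι), (l x i : ℕ) = if i ∈ T then (x : ℕ) else ((l.idxFun i).getD 0 : ℕ) := by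
    intro x i
    by_cases h : i ∈ T
    · have hnone : l.idxFun i = none := by simpa [hT] using h
      rw [if_pos h, l.apply_none _ _ hnone]
    · have : ¬ (l.idxFun i = none) := by
        intro hc; exact h (by simp [hT, hc])
      obtain ⟨y, hy⟩ := Option.ne_none_iff_exists'.mp this
      rw [if_neg h]
      show (((l.idxFun i).getD x : Fin (ℓ+1)) : ℕ) = _
      rw [hy]
      rfl
  have hsum : ∀ x : Fin (ℓ + 1), (1 + ∑ i, (l x i : ℕ)) = 1 + ((x : ℕ) * W + s) := by
    intro x
    congr 1
    rw [Finset.sum_congr rfl (fun i _ => happly x i), Finset.sum_ite]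
    have e1 : Finset.univ.filter (fun i => i ∈ T) = T := by
      ext i; simp
    have e2 : Finset.univ.filter (fun i => ¬ (i ∈ T)) = Finset.univ \ T := by
      ext i; simp
    rw [e1, e2, Finset.sum_const, smul_eq_mul, hs, Nat.mul_comm]
  refine ⟨1 + s, W, by omega, hWpos, ?_, ?_⟩
  · have hWcard : W ≤ Fintype.card ι := by
      simpa [hW] using Finset.card_le_card (Finset.subset_univ T)
    have hscard : s ≤ ℓ * Fintype.card ι := by
      calc s ≤ ∑ _i ∈ Finset.univ \ T, ℓ := by
              refine Finset.sum_le_sum (fun i _ => ?_)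
              exact Nat.lt_succ_iff.mp ((l.idxFun i).getD 0).isLt
        _ = (Finset.univ \ T).card * ℓ := by rw [Finset.sum_const, smul_eq_mul]
        _ ≤ Fintype.card ι * ℓ := by
              have h := Finset.card_le_card (Finset.sdiff_subset (s := (Finset.univ : Finset ι)) (t := T))
              exact Nat.mul_le_mul_right _ (by simpa using h)
        _ = ℓ * Fintype.card ι := Nat.mul_comm _ _
    nlinarith [hWcard, hscard]
  · intro i hi
    have hx0 := hl ⟨0, by omega⟩
    have hxi := hl ⟨i, by omega⟩
    simp only at hx0 hxi
    rw [hsum] at hx0 hxi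
    simp only [Fin.val_mk] at hx0 hxi
    rw [show 1 + s + i * W = 1 + (i * W + s) by ring, hxi,
      show (1 + s : ℕ) = 1 + (0 * W + s) by ring, hx0]

/-- Brauer-type lemma: monochromatic AP of length `L+1` together with `μ` times its
common difference, with a uniform bound; proof by induction on the color set. -/
theorem my_brauer (κ : Type) [Fintype κ] [DecidableEq κ] (μ L : ℕ) (hμ : 0 < μ) (hL : 0 < L) :
    ∀ s : Finset κ, ∃ N : ℕ, 0 < N ∧ ∀ C : ℕ → κ,
      (∀ x, 0 < x → x ≤ N → C x ∈ s) →
      ∃ a q : ℕ, 0 < a ∧ 0 < q ∧ a + L * q ≤ N ∧ μ * q ≤ N ∧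
        ∀ i ≤ L, C (a + i * q) = C (μ * q) := by
  intro s
  induction s using Finset.strongInduction with
  | _ s IH =>
  rcases Finset.eq_empty_or_nonempty s with rfl | hs
  · refine ⟨1, by omega, fun C hC => absurd (hC 1 (by omega) le_rfl) (by simp)⟩
  -- N' bounds all the IH's for s.erase c
  have hIH : ∀ c ∈ s, ∃ Nc : ℕ, 0 < Nc ∧ ∀ C : ℕ → κ,
      (∀ x, 0 < x → x ≤ Nc → C x ∈ s.erase c) →
      ∃ a q : ℕ, 0 < a ∧ 0 < q ∧ a + L * q ≤ Nc ∧ μ * q ≤ Nc ∧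
        ∀ i ≤ L, C (a + i * q) = C (μ * q) := fun c hc =>
    IH (s.erase c) (Finset.erase_ssubset hc)
  classical
  choose! Nc hNcpos hNc using hIH
  obtain ⟨N', hN'pos, hN'⟩ : ∃ N', 0 < N' ∧ ∀ c ∈ s, Nc c ≤ N' :=
    ⟨1 + s.sup Nc, by omega, fun c hc => le_trans (Finset.le_sup hc) (by omega)⟩
  obtain ⟨V, hVpos, hV⟩ := my_vdw κ (L * N')
  refine ⟨μ * N' * V, by positivity, fun C hC => ?_⟩
  obtain ⟨b, q₀, hb, hq₀, hbound, hmono⟩ := hV C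
  have hVle : V ≤ μ * N' * V := Nat.le_mul_of_pos_left V (by positivity)
  have hbV : b ≤ V := le_trans (Nat.le_add_right _ _) hbound
  have hbN : b ≤ μ * N' * V := le_trans hbV hVle
  have hq₀V : q₀ ≤ V := by
    have h1 : q₀ ≤ L * N' * q₀ := Nat.le_mul_of_pos_left q₀ (by positivity)
    exact le_trans h1 (le_trans (Nat.le_add_left _ _) hbound)
  have hc₁ : C b ∈ s := hC b hb hbN
  by_cases hcase : ∃ j, 0 < j ∧ j ≤ Nc (C b) ∧ C (μ * (j * q₀)) = C b
  · obtain ⟨j, hj0, hjN, hj⟩ := hcase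
    have hjN' : j ≤ N' := le_trans hjN (hN' _ hc₁)
    refine ⟨b, j * q₀, hb, by positivity, ?_, ?_, fun i hi => ?_⟩
    · calc b + L * (j * q₀) = b + (L * j) * q₀ := by ring
        _ ≤ b + (L * N') * q₀ :=
            Nat.add_le_add_left (Nat.mul_le_mul_right q₀ (Nat.mul_le_mul_left L hjN')) b
        _ ≤ V := hbound
        _ ≤ μ * N' * V := hVle
    · calc μ * (j * q₀) ≤ μ * (N' * V) :=
            Nat.mul_le_mul_left μ (Nat.mul_le_mul hjN' hq₀V)
        _ = μ * N' * V := by ring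
    · rw [hj, show b + i * (j * q₀) = b + (i * j) * q₀ by ring]
      exact hmono (i * j) (Nat.mul_le_mul hi hjN')
  · push_neg at hcase
    set c₁ := C b with hc₁def
    set C' : ℕ → κ := fun x => C (μ * q₀ * x) with hC'
    have hNcN' : Nc c₁ ≤ N' := hN' _ hc₁
    have hkey : ∀ x : ℕ, x ≤ N' → μ * q₀ * x ≤ μ * N' * V := by
      intro x hx
      calc μ * q₀ * x = μ * (q₀ * x) := by ring
        _ ≤ μ * (V * N') := Nat.mul_le_mul_left μ (Nat.mul_le_mul hq₀V hx)
        _ = μ * N' * V := by ring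
    have hC'mem : ∀ x, 0 < x → x ≤ Nc c₁ → C' x ∈ s.erase c₁ := by
      intro x hx hxN
      have hxN' : x ≤ N' := le_trans hxN hNcN'
      refine Finset.mem_erase.mpr ⟨?_, hC _ (by positivity) (hkey x hxN')⟩
      have h := hcase x hx hxN
      rw [hC']
      simpa [Nat.mul_assoc, Nat.mul_comm, Nat.mul_left_comm] using h
    obtain ⟨a'', q'', ha'', hq'', hb1, hb2, hmono'⟩ := hNc c₁ hc₁ C' hC'mem
    refine ⟨μ * q₀ * a'', μ * q₀ * q'', by positivity, by positivity, ?_, ?_, fun i hi => ?_⟩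
    · calc μ * q₀ * a'' + L * (μ * q₀ * q'') = μ * q₀ * (a'' + L * q'') := by ring
        _ ≤ μ * N' * V := hkey _ (le_trans hb1 hNcN')
    · calc μ * (μ * q₀ * q'') = μ * q₀ * (μ * q'') := by ring
        _ ≤ μ * N' * V := hkey _ (le_trans hb2 hNcN')
    · have h1 : μ * q₀ * a'' + i * (μ * q₀ * q'') = μ * q₀ * (a'' + i * q'') := by ring
      have h2 : μ * (μ * q₀ * q'') = μ * q₀ * (μ * q'') := by ring
      rw [h1, h2]
      exact hmono' i hi

lemma geom_bound (n : ℕ) (t : Finset (Fin n)) :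
    |∑ j ∈ t, (-1:ℤ)^(j:ℕ) * 2^(j:ℕ)| ≤ 2^n := by
  calc |∑ j ∈ t, (-1:ℤ)^(j:ℕ) * 2^(j:ℕ)| ≤ ∑ j ∈ t, |(-1:ℤ)^(j:ℕ) * 2^(j:ℕ)| :=
        Finset.abs_sum_le_sum_abs _ _
    _ = ∑ j ∈ t, 2^(j:ℕ) := by
        refine Finset.sum_congr rfl (fun j _ => ?_)
        rw [abs_mul, abs_pow, abs_neg, abs_one, one_pow, one_mul, abs_pow]
        norm_num
    _ ≤ ∑ j : Fin n, (2:ℤ)^(j:ℕ) := Finset.sum_le_sum_of_subset_of_nonneg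
        (Finset.subset_univ t) (fun j _ _ => by positivity)
    _ ≤ 2^n := by
        rw [Fin.sum_univ_eq_sum_range (fun j => (2:ℤ)^j)]
        have h := geom_sum_mul (2:ℤ) n
        have : ∑ i ∈ Finset.range n, (2:ℤ)^i = 2^n - 1 := by linarith [h]
        rw [this]; omega

theorem regular_aux (n : ℕ) (hn : 2 ≤ n) :
    IsRegularEq n (fun i => (-1 : ℤ) ^ (i : ℕ) * 2 ^ (i : ℕ)) (n - 1) := by
  intro C
  classical
  set μ : ℕ := 2^(n-1) with hμdef
  set L : ℕ := 2^(2*n) with hLdef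
  set Cs : ℕ → (Fin n → Fin (n-1)) := fun v k => C (2^(k:ℕ) * v) with hCs
  obtain ⟨N, hNpos, hB⟩ := my_brauer (Fin n → Fin (n-1)) μ L (by positivity) (by positivity)
    Finset.univ
  obtain ⟨a, q, ha, hq, -, -, hmono⟩ := hB Cs (fun x _ _ => Finset.mem_univ _)
  set γ : Fin n → Fin (n-1) := Cs (μ * q) with hγ
  -- all levels of AP points and of μ*q are colored by γ
  have HAP : ∀ i ≤ L, ∀ k : Fin n, C (2^(k:ℕ) * (a + i * q)) = γ k := by
    intro i hi k
    have := hmono i hi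
    exact congrFun this k
  have Hμq : ∀ k : Fin n, C (2^(k:ℕ) * (μ * q)) = γ k := fun k => rfl
  -- pigeonhole on levels
  have hcard : Fintype.card (Fin (n-1)) < Fintype.card (Fin n) := by
    simp only [Fintype.card_fin]; omega
  obtain ⟨kα, kβ, hlt, heq⟩ : ∃ kα kβ : Fin n, (kα:ℕ) < (kβ:ℕ) ∧ γ kα = γ kβ := by
    obtain ⟨k₁, k₂, hne, he⟩ := Fintype.exists_ne_map_eq_of_card_lt γ hcard
    rcases Nat.lt_or_ge (k₁:ℕ) (k₂:ℕ) with h | h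
    · exact ⟨k₁, k₂, h, he⟩
    · have : (k₂:ℕ) < (k₁:ℕ) := by
        rcases Nat.lt_or_ge (k₂:ℕ) (k₁:ℕ) with h' | h'
        · exact h'
        · exact absurd (Fin.ext (le_antisymm h h')).symm hne
      exact ⟨k₂, k₁, this, he.symm⟩
  set α : ℕ := (kα : ℕ) with hα
  set d : ℕ := (kβ : ℕ) - (kα : ℕ) with hd
  have hd1 : 1 ≤ d := by omega
  have hβval : (kβ : ℕ) = α + d := by omega
  have hdn : α + d ≤ n - 1 := by have := kβ.isLt; omega
  -- common bound facts
  have hLsplit : L = 2^n * 2^n := by rw [hLdef, ← pow_add]; congr 1; omega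
  have hboundgen : ∀ T : ℤ, |T| ≤ 2^n → (T.toNat) * 2^(n-1-d) ≤ L := by
    intro T hT
    have h1 : T.toNat ≤ 2^n := Int.toNat_le.mpr (le_trans (le_abs_self T) (by exact_mod_cast hT))
    calc T.toNat * 2^(n-1-d) ≤ 2^n * 2^(n-1-d) := Nat.mul_le_mul_right _ h1
      _ ≤ 2^n * 2^n := Nat.mul_le_mul_left _ (Nat.pow_le_pow_right (by norm_num) (by omega))
      _ = L := hLsplit.symm
  have hcastμ : ((μ : ℕ) : ℤ) = 2^(n-1) := by rw [hμdef]; push_cast; ring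
  have hpowsplit : (2:ℤ)^(n-1) = 2^d * 2^(n-1-d) := by
    rw [← pow_add]; congr 1; omega
  rcases Nat.even_or_odd d with hev | hodd
  · -- d even (hence d ≥ 2)
    have hd2 : 2 ≤ d := by rcases hev with ⟨t, ht⟩; omega
    obtain ⟨j₀, hj₀⟩ : ∃ j : Fin n, (j : ℕ) = 0 := ⟨⟨0, by omega⟩, rfl⟩
    obtain ⟨j₁, hj₁⟩ : ∃ j : Fin n, (j : ℕ) = 1 := ⟨⟨1, by omega⟩, rfl⟩
    obtain ⟨jd, hjd⟩ : ∃ j : Fin n, (j : ℕ) = d := ⟨⟨d, by omega⟩, rfl⟩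
    have h01 : j₀ ≠ j₁ := fun h => by rw [Fin.ext_iff, hj₀, hj₁] at h; omega
    have h0d : j₀ ≠ jd := fun h => by rw [Fin.ext_iff, hj₀, hjd] at h; omega
    have h1d : j₁ ≠ jd := fun h => by rw [Fin.ext_iff, hj₁, hjd] at h; omega
    obtain ⟨S, hS⟩ : ∃ S : ℤ, S = ∑ j ∈ Finset.univ \ ({j₀, j₁, jd} : Finset (Fin n)),
        (-1)^(j:ℕ) * 2^(j:ℕ) := ⟨_, rfl⟩
    have hSabs : |S| ≤ 2^n := hS ▸ geom_bound n _
    obtain ⟨k₀, hk₀⟩ : ∃ k : ℕ, k = (-S).toNat := ⟨_, rfl⟩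
    obtain ⟨kd, hkd⟩ : ∃ k : ℕ, k = S.toNat := ⟨_, rfl⟩
    obtain ⟨i₀, hi₀⟩ : ∃ v : ℕ, v = k₀ * 2^(n-1-d) := ⟨_, rfl⟩
    obtain ⟨i₁, hi₁⟩ : ∃ v : ℕ, v = kd * 2^(n-1-d) := ⟨_, rfl⟩
    have hi₀L : i₀ ≤ L := by
      rw [hi₀, hk₀]; exact hboundgen (-S) (by rw [abs_neg]; exact hSabs)
    have hi₁L : i₁ ≤ L := by
      rw [hi₁, hkd]; exact hboundgen S hSabs
    have hkk : (k₀ : ℤ) - (kd : ℤ) = -S := by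
      rw [hk₀, hkd]
      have h := Int.toNat_sub_toNat_neg (-S)
      rw [neg_neg] at h
      linarith [h]
    obtain ⟨x, hxdef⟩ : ∃ x : Fin n → ℕ, x = fun j =>
        if j = j₀ then 2^(α+d) * (a + i₀ * q)
        else if j = j₁ then 2^(α+d) * (a + i₁ * q)
        else if j = jd then 2^α * (a + i₁ * q)
        else 2^α * (μ * q) := ⟨_, rfl⟩
    have hxj₀ : x j₀ = 2^(α+d) * (a + i₀ * q) := by rw [hxdef]; simp
    have hxj₁ : x j₁ = 2^(α+d) * (a + i₁ * q) := by rw [hxdef]; simp [h01.symm]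
    have hxjd : x jd = 2^α * (a + i₁ * q) := by rw [hxdef]; simp [h0d.symm, h1d.symm]
    have hxelse : ∀ j, j ≠ j₀ → j ≠ j₁ → j ≠ jd → x j = 2^α * (μ * q) := by
      intro j h1 h2 h3; rw [hxdef]; simp [h1, h2, h3]
    have key : ∀ j, C (x j) = γ kα := by
      intro j
      by_cases h1 : j = j₀
      · rw [h1, hxj₀, show α + d = (kβ:ℕ) from hβval.symm, HAP i₀ hi₀L kβ, ← heq]
      · by_cases h2 : j = j₁
        · rw [h2, hxj₁, show α + d = (kβ:ℕ) from hβval.symm, HAP i₁ hi₁L kβ, ← heq]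
        · by_cases h3 : j = jd
          · rw [h3, hxjd]
            exact HAP i₁ hi₁L kα
          · rw [hxelse j h1 h2 h3]
    refine ⟨x, ?_, fun i j => by rw [key i, key j], ?_⟩
    · intro j
      by_cases h1 : j = j₀
      · rw [h1, hxj₀]; positivity
      · by_cases h2 : j = j₁
        · rw [h2, hxj₁]; positivity
        · by_cases h3 : j = jd
          · rw [h3, hxjd]; positivity
          · rw [hxelse j h1 h2 h3]; positivity
    · -- equation
      have hsub : ({j₀, j₁, jd} : Finset (Fin n)) ⊆ Finset.univ := Finset.subset_univ _
      have hsplit := Finset.sum_sdiff (f := fun j : Fin n => (-1:ℤ)^(j:ℕ) * 2^(j:ℕ) * (x j : ℤ)) hsub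
      have hpair : ∑ j ∈ ({j₀, j₁, jd} : Finset (Fin n)), (-1:ℤ)^(j:ℕ) * 2^(j:ℕ) * (x j : ℤ)
          = (x j₀ : ℤ) + (-2) * (x j₁ : ℤ) + (-1)^d * 2^d * (x jd : ℤ) := by
        rw [Finset.sum_insert (by simp [h01, h0d]), Finset.sum_insert (by simp [h1d]),
          Finset.sum_singleton, hj₀, hj₁, hjd]
        push_cast
        ring
      have hrest : ∑ j ∈ Finset.univ \ ({j₀, j₁, jd} : Finset (Fin n)),
          (-1:ℤ)^(j:ℕ) * 2^(j:ℕ) * (x j : ℤ) = S * ((2^α * (μ * q) : ℕ) : ℤ) := by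
        rw [hS, Finset.sum_mul]
        refine Finset.sum_congr rfl (fun j hj => ?_)
        simp only [Finset.mem_sdiff, Finset.mem_insert, Finset.mem_singleton] at hj
        push_neg at hj
        rw [hxelse j hj.2.1 hj.2.2.1 hj.2.2.2]
      show ∑ j : Fin n, (-1:ℤ)^(j:ℕ) * 2^(j:ℕ) * (x j : ℤ) = 0
      rw [← hsplit, hpair, hrest, hxj₀, hxj₁, hxjd, Even.neg_one_pow hev]
      push_cast [hcastμ]
      rw [hi₀, hi₁]
      push_cast
      rw [hpowsplit]
      linear_combination (2^α * 2^d * 2^(n-1-d) * (q:ℤ)) * hkk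
  · -- d odd
    obtain ⟨j₀, hj₀⟩ : ∃ j : Fin n, (j : ℕ) = 0 := ⟨⟨0, by omega⟩, rfl⟩
    obtain ⟨jd, hjd⟩ : ∃ j : Fin n, (j : ℕ) = d := ⟨⟨d, by omega⟩, rfl⟩
    have h0d : j₀ ≠ jd := fun h => by rw [Fin.ext_iff, hj₀, hjd] at h; omega
    obtain ⟨S, hS⟩ : ∃ S : ℤ, S = ∑ j ∈ Finset.univ \ ({j₀, jd} : Finset (Fin n)),
        (-1)^(j:ℕ) * 2^(j:ℕ) := ⟨_, rfl⟩
    have hSabs : |S| ≤ 2^n := hS ▸ geom_bound n _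
    obtain ⟨k₀, hk₀⟩ : ∃ k : ℕ, k = (-S).toNat := ⟨_, rfl⟩
    obtain ⟨kd, hkd⟩ : ∃ k : ℕ, k = S.toNat := ⟨_, rfl⟩
    obtain ⟨i₀, hi₀⟩ : ∃ v : ℕ, v = k₀ * 2^(n-1-d) := ⟨_, rfl⟩
    obtain ⟨id', hid'⟩ : ∃ v : ℕ, v = kd * 2^(n-1-d) := ⟨_, rfl⟩
    have hi₀L : i₀ ≤ L := by
      rw [hi₀, hk₀]; exact hboundgen (-S) (by rw [abs_neg]; exact hSabs)
    have hid'L : id' ≤ L := by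
      rw [hid', hkd]; exact hboundgen S hSabs
    have hkk : (k₀ : ℤ) - (kd : ℤ) = -S := by
      rw [hk₀, hkd]
      have h := Int.toNat_sub_toNat_neg (-S)
      rw [neg_neg] at h
      linarith [h]
    obtain ⟨x, hxdef⟩ : ∃ x : Fin n → ℕ, x = fun j =>
        if j = j₀ then 2^(α+d) * (a + i₀ * q)
        else if j = jd then 2^α * (a + id' * q)
        else 2^α * (μ * q) := ⟨_, rfl⟩
    have hxj₀ : x j₀ = 2^(α+d) * (a + i₀ * q) := by rw [hxdef]; simp
    have hxjd : x jd = 2^α * (a + id' * q) := by rw [hxdef]; simp [h0d.symm]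
    have hxelse : ∀ j, j ≠ j₀ → j ≠ jd → x j = 2^α * (μ * q) := by
      intro j h1 h3; rw [hxdef]; simp [h1, h3]
    have key : ∀ j, C (x j) = γ kα := by
      intro j
      by_cases h1 : j = j₀
      · rw [h1, hxj₀, show α + d = (kβ:ℕ) from hβval.symm, HAP i₀ hi₀L kβ, ← heq]
      · by_cases h3 : j = jd
        · rw [h3, hxjd]
          exact HAP id' hid'L kα
        · rw [hxelse j h1 h3]
    refine ⟨x, ?_, fun i j => by rw [key i, key j], ?_⟩
    · intro j
      by_cases h1 : j = j₀
      · rw [h1, hxj₀]; positivity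
      · by_cases h3 : j = jd
        · rw [h3, hxjd]; positivity
        · rw [hxelse j h1 h3]; positivity
    · have hsub : ({j₀, jd} : Finset (Fin n)) ⊆ Finset.univ := Finset.subset_univ _
      have hsplit := Finset.sum_sdiff
        (f := fun j : Fin n => (-1:ℤ)^(j:ℕ) * 2^(j:ℕ) * (x j : ℤ)) hsub
      have hpair : ∑ j ∈ ({j₀, jd} : Finset (Fin n)), (-1:ℤ)^(j:ℕ) * 2^(j:ℕ) * (x j : ℤ)
          = (x j₀ : ℤ) + (-1)^d * 2^d * (x jd : ℤ) := by
        rw [Finset.sum_insert (by simp [h0d]), Finset.sum_singleton, hj₀, hjd]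
        push_cast
        ring
      have hrest : ∑ j ∈ Finset.univ \ ({j₀, jd} : Finset (Fin n)),
          (-1:ℤ)^(j:ℕ) * 2^(j:ℕ) * (x j : ℤ) = S * ((2^α * (μ * q) : ℕ) : ℤ) := by
        rw [hS, Finset.sum_mul]
        refine Finset.sum_congr rfl (fun j hj => ?_)
        simp only [Finset.mem_sdiff, Finset.mem_insert, Finset.mem_singleton] at hj
        push_neg at hj
        rw [hxelse j hj.2.1 hj.2.2]
      show ∑ j : Fin n, (-1:ℤ)^(j:ℕ) * 2^(j:ℕ) * (x j : ℤ) = 0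
      rw [← hsplit, hpair, hrest, hxj₀, hxjd, Odd.neg_one_pow hodd]
      push_cast [hcastμ]
      rw [hi₀, hid']
      push_cast
      rw [hpowsplit]
      linear_combination (2^α * 2^d * 2^(n-1-d) * (q:ℤ)) * hkk

theorem notreg (n : ℕ) (hn : 2 ≤ n) :
    ¬ IsRegularEq n (fun i => (-1 : ℤ) ^ (i : ℕ) * 2 ^ (i : ℕ)) n := by
  intro h
  have hn0 : 0 < n := by omega
  obtain ⟨x, hpos, hmono, hsum⟩ :=
    h (fun m => ⟨padicValNat 2 m % n, Nat.mod_lt _ hn0⟩)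
  set ν : Fin n → ℕ := fun i => padicValNat 2 (x i) with hν
  have hmod : ∀ i j : Fin n, ν i % n = ν j % n := by
    intro i j
    have := hmono i j
    simpa [Fin.mk.injEq] using this
  set f : Fin n → ℕ := fun i => (i : ℕ) + ν i with hf
  have hxne : ∀ i, x i ≠ 0 := fun i => (hpos i).ne'
  have key : ∀ i j : Fin n, f i = f j → ν i ≤ ν j → i = j := by
    intro i j hij hle
    have hij' : (i : ℕ) + ν i = (j : ℕ) + ν j := hij
    have h3 : n ∣ (ν j - ν i) := (Nat.modEq_iff_dvd' hle).mp (hmod i j)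
    have hd : ν j - ν i < n := by
      have h1 : (i : ℕ) < n := i.isLt
      have h2 : (j : ℕ) < n := j.isLt
      omega
    have h0 : ν j - ν i = 0 := Nat.eq_zero_of_dvd_of_lt h3 hd
    exact Fin.ext (by omega)
  have hinj : ∀ i j : Fin n, f i = f j → i = j := by
    intro i j hij
    rcases le_total (ν i) (ν j) with hle | hle
    · exact key i j hij hle
    · exact (key j i hij.symm hle).symm
  obtain ⟨i₀, -, hmin⟩ := Finset.exists_min_image Finset.univ f ⟨⟨0, hn0⟩, Finset.mem_univ _⟩
  set m : Fin n → ℕ := fun i => x i / 2 ^ (ν i) with hm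
  have hxmN : ∀ i, x i = 2 ^ (ν i) * m i := by
    intro i
    rw [hm]
    exact (Nat.mul_div_cancel' pow_padicValNat_dvd).symm
  have hxm : ∀ i, (x i : ℤ) = 2 ^ (ν i) * (m i : ℤ) := by
    intro i
    exact_mod_cast congrArg (Nat.cast : ℕ → ℤ) (hxmN i)
  have hFle : ∀ i, f i₀ ≤ f i := fun i => hmin i (Finset.mem_univ i)
  have hterm : ∀ i : Fin n, (-1 : ℤ) ^ (i : ℕ) * 2 ^ (i : ℕ) * (x i : ℤ)
      = 2 ^ (f i₀) * (2 ^ (f i - f i₀) * ((-1 : ℤ) ^ (i : ℕ) * (m i : ℤ))) := by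
    intro i
    rw [hxm i]
    have h1 : (2 : ℤ) ^ (i : ℕ) * 2 ^ (ν i) = 2 ^ (f i) := by
      rw [← pow_add]
    have h2 : (2 : ℤ) ^ (f i) = 2 ^ (f i₀) * 2 ^ (f i - f i₀) := by
      rw [← pow_add]
      congr 1
      have := hFle i
      omega
    calc (-1 : ℤ) ^ (i : ℕ) * 2 ^ (i : ℕ) * (2 ^ (ν i) * (m i : ℤ))
        = ((2 : ℤ) ^ (i : ℕ) * 2 ^ (ν i)) * ((-1 : ℤ) ^ (i : ℕ) * (m i : ℤ)) := by ring
      _ = 2 ^ (f i₀) * (2 ^ (f i - f i₀) * ((-1 : ℤ) ^ (i : ℕ) * (m i : ℤ))) := by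
          rw [h1, h2]; ring
  set S : ℤ := ∑ i : Fin n, 2 ^ (f i - f i₀) * ((-1 : ℤ) ^ (i : ℕ) * (m i : ℤ)) with hS
  have hsum2 : (2 : ℤ) ^ (f i₀) * S = 0 := by
    rw [hS, Finset.mul_sum, ← hsum]
    exact Finset.sum_congr rfl fun i _ => (hterm i).symm
  have hS0 : S = 0 := by
    have h2 : (2 : ℤ) ^ (f i₀) ≠ 0 := pow_ne_zero _ (by norm_num)
    exact (mul_eq_zero.mp hsum2).resolve_left h2
  -- parity contradiction
  have hsplit : S = 2 ^ (f i₀ - f i₀) * ((-1 : ℤ) ^ (i₀ : ℕ) * (m i₀ : ℤ))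
      + ∑ i ∈ Finset.univ.erase i₀, 2 ^ (f i - f i₀) * ((-1 : ℤ) ^ (i : ℕ) * (m i : ℤ)) := by
    rw [hS]
    exact (Finset.add_sum_erase _ _ (Finset.mem_univ i₀)).symm
  have hrest : (2 : ℤ) ∣ ∑ i ∈ Finset.univ.erase i₀, 2 ^ (f i - f i₀) * ((-1 : ℤ) ^ (i : ℕ) * (m i : ℤ)) := by
    apply Finset.dvd_sum
    intro i hi
    have hne : i ≠ i₀ := Finset.ne_of_mem_erase hi
    have hlt : f i₀ < f i := by
      rcases lt_or_eq_of_le (hFle i) with h | h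
      · exact h
      · exact absurd (hinj i i₀ h.symm) hne
    have : f i - f i₀ ≠ 0 := by omega
    obtain ⟨k, hk⟩ : ∃ k, f i - f i₀ = k + 1 := ⟨f i - f i₀ - 1, by omega⟩
    rw [hk, pow_succ]
    exact ⟨2 ^ k * ((-1 : ℤ) ^ (i : ℕ) * (m i : ℤ)), by ring⟩
  have ht0 : (2 : ℤ) ∣ (-1 : ℤ) ^ (i₀ : ℕ) * (m i₀ : ℤ) := by
    have : (2 : ℤ) ∣ S - ∑ i ∈ Finset.univ.erase i₀, 2 ^ (f i - f i₀) * ((-1 : ℤ) ^ (i : ℕ) * (m i : ℤ)) := by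
      rw [hS0]
      exact dvd_sub (dvd_zero 2) hrest
    have h1 : S - ∑ i ∈ Finset.univ.erase i₀, 2 ^ (f i - f i₀) * ((-1 : ℤ) ^ (i : ℕ) * (m i : ℤ))
        = 2 ^ (f i₀ - f i₀) * ((-1 : ℤ) ^ (i₀ : ℕ) * (m i₀ : ℤ)) := by
      rw [hsplit]; ring
    rw [h1] at this
    simpa using this
  have hmdvd : (2 : ℤ) ∣ (m i₀ : ℤ) := by
    have := Dvd.dvd.mul_left ht0 ((-1 : ℤ) ^ (i₀ : ℕ))
    have heq : (-1 : ℤ) ^ (i₀ : ℕ) * ((-1 : ℤ) ^ (i₀ : ℕ) * (m i₀ : ℤ)) = (m i₀ : ℤ) := by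
      have hev : Even ((i₀ : ℕ) + (i₀ : ℕ)) := ⟨(i₀ : ℕ), rfl⟩
      rw [← mul_assoc, ← pow_add, Even.neg_one_pow hev, one_mul]
    rwa [heq] at this
  have hmN : (2 : ℕ) ∣ m i₀ := by exact_mod_cast hmdvd
  have : (2 : ℕ) ^ (ν i₀ + 1) ∣ x i₀ := by
    obtain ⟨k, hk⟩ := hmN
    exact ⟨k, by rw [hxmN i₀, hk, pow_succ]; ring⟩
  exact pow_succ_padicValNat_not_dvd (hxne i₀) this

/-- Theorem 3.2: for every `n ≥ 2`, the equation
`∑_{i=1}^{n} (−1)^{i−1} 2^{i−1} xᵢ = 0` has degree of regularity exactly `n − 1`: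
it is `(n−1)`-regular but not `n`-regular. -/
theorem alternating_powers_of_two_dor (n : ℕ) (hn : 2 ≤ n) :
    IsRegularEq n (fun i => (-1 : ℤ) ^ (i : ℕ) * 2 ^ (i : ℕ)) (n - 1) ∧
      ¬ IsRegularEq n (fun i => (-1 : ℤ) ^ (i : ℕ) * 2 ^ (i : ℕ)) n := by
  exact ⟨regular_aux n hn, notreg n hn⟩
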